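/- Let f ∈ Γ(X) and assume A ∩ dom f ≠ ∅. Then w*-cl(epi f* + K) = epi (f + δ_A)*. -/

import Mathlib

open Pointwise

noncomputable section

variable {X : Type*} [AddCommGroup X] [Module ℝ X] [TopologicalSpace X]

/-- Fenchel conjugate, as a function on the weak-* dual. -/
def conjFn (h : X → EReal) : WeakDual ℝ X → EReal :=
  fun p => ⨆ x : X, (p x : EReal) - h x

/-- Epigraph of an extended-real-valued function. -/
def epiFn {V : Type*} (h : V → EReal) : Set (V × ℝ) :=
  {q | h q.1 ≤ (q.2 : EReal)}

/-- Graph of an extended-real-valued function (where it is finite). -/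
def gphFn {V : Type*} (h : V → EReal) : Set (V × ℝ) :=
  {q | h q.1 = (q.2 : EReal)}

/-- Effective domain. -/
def domFn {V : Type*} (h : V → EReal) : Set V :=
  {x | h x < ⊤}

open Classical in
/-- Indicator function of a set. -/
def indicatorE {V : Type*} (D : Set V) : V → EReal :=
  fun x => if x ∈ D then (0 : EReal) else ⊤

/-- Convex cone generated by `D ∪ {0}`. -/
def coneGen {V : Type*} [AddCommGroup V] [Module ℝ V] (D : Set V) : Set V :=
  {0} ∪ {y | ∃ t : ℝ, 0 ≤ t ∧ ∃ x ∈ convexHull ℝ D, y = t • x}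

/-- `h ∈ Γ(X)`: proper, convex and lower semicontinuous. -/
def InGamma (h : X → EReal) : Prop :=
  (∀ x, h x ≠ ⊥) ∧ (∃ x, h x ≠ ⊤) ∧
    Convex ℝ {q : X × ℝ | h q.1 ≤ (q.2 : EReal)} ∧ LowerSemicontinuous h

/-- Solution set `A` of the system `σ = {f i x ≤ 0, i ∈ I; x ∈ C}`. -/
def solSet {I : Type*} (C : Set X) (f : I → X → EReal) : Set X :=
  {x | x ∈ C ∧ ∀ i, f i x ≤ (0 : EReal)}

/-- Characteristic cone `K = cone (epi δ_C* ∪ ⋃ i, epi f_i*)` of the system. -/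
def charCone {I : Type*} (C : Set X) (f : I → X → EReal) : Set (WeakDual ℝ X × ℝ) :=
  coneGen (epiFn (conjFn (indicatorE C)) ∪ ⋃ i, epiFn (conjFn (f i)))

/-- Barrier cone `barr C = dom δ_C*`. -/
def barCone (C : Set X) : Set (WeakDual ℝ X) :=
  domFn (conjFn (indicatorE C))

/-- The Farkas–Minkowski constraint qualification. -/
def IsFM {I : Type*} (C : Set X) (f : I → X → EReal) : Prop :=
  (solSet C f).Nonempty ∧ IsClosed (charCone C f)

/-- Recession function `h^∞ = δ*_{dom h*}`. -/
def recFn (h : X → EReal) : X → EReal :=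
  fun x => ⨆ q ∈ domFn (conjFn h), ((q x : ℝ) : EReal)

/-- Recession cone `D^∞ = ⋂_{t>0} t (D - a)`, for any `a ∈ D`. -/
def recCone (D : Set X) : Set X :=
  {d | ∀ a ∈ D, ∀ t : ℝ, 0 < t → d ∈ t • (D - ({a} : Set X))}

/-- Subdifferential of `h` at `a`. -/
def subdiff (h : X → EReal) (a : X) : Set (WeakDual ℝ X) :=
  {p | (∃ r : ℝ, h a = (r : EReal)) ∧ ∀ x, h a + ((p (x - a) : ℝ) : EReal) ≤ h x}

/-! The inclusion `⊆` holds because `epi (g + δ_A)*` is weak*-closed and contains `epi g* + K`.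
Conversely, separate a point `(p, r)` outside the closure from `epi g* + K` by a weak*-continuous
functional, that is, by a pair `(x, d) ∈ X × ℝ`. A non-vertical inequality
`w.1 y - w.2 ≤ β` valid on `epi g* + K` splits, because `K` is a cone, into inequalities with
right-hand side `0` on the generators of `K`; Fenchel–Moreau turns these into `y ∈ C`,
`f i y ≤ 0` and `g y ≤ β`, so `y ∈ A` and `(p, r)` satisfies the inequality too. A vertical
separating functional is tilted into a non-vertical one by adding a small multiple of the
inequality `w.1 a - w.2 ≤ g a` given by a point `a ∈ A ∩ dom g`; the same perturbation proves
Fenchel–Moreau itself. -/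

open Filter Topology

-- `WeakDual` is not reducible, so the instance for `WeakBilin` is not found through it.
instance : LocallyConvexSpace ℝ (WeakDual ℝ X) := WeakBilin.locallyConvexSpace

theorem EReal.coe_sub_le_iff_forall {a s : ℝ} {b : EReal} :
    (a : EReal) - b ≤ s ↔ ∀ t : ℝ, b ≤ t → a - t ≤ s := by
  induction b using EReal.rec with
  | bot =>
    simp only [EReal.coe_sub_bot, top_le_iff, EReal.coe_ne_top, bot_le, true_implies, false_iff,
      not_forall, not_le]
    exact ⟨a - s - 1, by linarith⟩
  | coe c =>
    simp only [← EReal.coe_sub, EReal.coe_le_coe_iff]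
    exact ⟨fun h t ht => by linarith, fun h => h c le_rfl⟩
  | top => simp

theorem nonpos_of_forall_ge_add_mul_le {a b c t₀ : ℝ} (h : ∀ t ≥ t₀, a + b * t ≤ c) : b ≤ 0 := by
  by_contra! hb
  have ht := h _ (le_max_left t₀ ((c - a + 1) / b))
  have := (div_le_iff₀' hb).1 (le_max_right t₀ ((c - a + 1) / b))
  linarith

theorem le_of_forall_pos_add_mul_le {a b c : ℝ} (h : ∀ ε > 0, a + ε * b ≤ c) : a ≤ c := by
  have hlim : Tendsto (fun ε : ℝ => a + ε * b) (𝓝[>] 0) (𝓝 a) := by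
    have hcont : Continuous fun ε : ℝ => a + ε * b := by fun_prop
    simpa using (hcont.tendsto 0).mono_left nhdsWithin_le_nhds
  exact le_of_tendsto hlim (eventually_nhdsWithin_of_forall h)

theorem inv_mul_sub_le_inv_mul_iff {a b c t : ℝ} (hc : 0 < c) :
    c⁻¹ * a - t ≤ c⁻¹ * b ↔ a - c * t ≤ b := by
  rw [show c⁻¹ * a - t = c⁻¹ * (a - c * t) by field_simp, mul_le_mul_iff_right₀ (inv_pos.2 hc)]

/-- Tilting by `ε • (a, -1)` makes `(y, d)` non-vertical; then let `ε → 0`. -/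
theorem le_of_forall_sub_le_of_nonvertical {E F : Type*} [AddCommGroup F] [Module ℝ F]
    (B : E → F →ₗ[ℝ] ℝ) {S : Set (E × ℝ)} {z : E × ℝ}
    (hz : ∀ y β, (∀ w ∈ S, B w.1 y - w.2 ≤ β) → B z.1 y - z.2 ≤ β)
    {a : F} {γ : ℝ} (ha : ∀ w ∈ S, B w.1 a - w.2 ≤ γ)
    {y : F} {d u : ℝ} (hd : d ≤ 0) (hy : ∀ w ∈ S, B w.1 y + d * w.2 ≤ u) :
    B z.1 y + d * z.2 ≤ u := by
  refine le_of_forall_pos_add_mul_le (b := B z.1 a - z.2 - γ) fun ε hε => ?_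
  have hc : 0 < ε - d := by linarith
  have key := hz ((ε - d)⁻¹ • (y + ε • a)) ((ε - d)⁻¹ * (u + ε * γ)) fun w hw => by
    have := mul_le_mul_of_nonneg_left (ha w hw) hε.le
    simp only [map_smul, map_add, smul_eq_mul, inv_mul_sub_le_inv_mul_iff hc]
    linarith [hy w hw]
  simp only [map_smul, map_add, smul_eq_mul, inv_mul_sub_le_inv_mul_iff hc] at key
  linarith

theorem geometric_hahn_banach_closed_point_prod {E : Type*} [TopologicalSpace E] [AddCommGroup E]
    [Module ℝ E] [IsTopologicalAddGroup E] [ContinuousSMul ℝ E] [LocallyConvexSpace ℝ E]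
    {S : Set (E × ℝ)} (hconv : Convex ℝ S) (hclosed : IsClosed S) {z : E × ℝ} (hz : z ∉ S) :
    ∃ (φ : StrongDual ℝ E) (d u : ℝ), (∀ w ∈ S, φ w.1 + d * w.2 < u) ∧ u < φ z.1 + d * z.2 := by
  obtain ⟨F, u, hS, hFz⟩ := geometric_hahn_banach_closed_point hconv hclosed hz
  have hF (w : E × ℝ) : F w = F.comp (.inl ℝ E ℝ) w.1 + F (0, 1) * w.2 := by
    calc F w = F (ContinuousLinearMap.inl ℝ E ℝ w.1 + w.2 • (0, 1)) := by congr 1; ext <;> simp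
      _ = _ := by rw [map_add, map_smul, smul_eq_mul, mul_comm]; rfl
  exact ⟨F.comp (.inl ℝ E ℝ), F (0, 1), u, fun w hw => hF w ▸ hS w hw, hF z ▸ hFz⟩

theorem LowerSemicontinuous.isClosed_epiFn {V : Type*} [TopologicalSpace V] {h : V → EReal}
    (hh : LowerSemicontinuous h) : IsClosed (epiFn h) :=
  hh.isClosed_epigraph.preimage
    (continuous_fst.prodMk (continuous_coe_real_ereal.comp continuous_snd))

theorem mem_epiFn_conjFn_iff {h : X → EReal} {w : WeakDual ℝ X × ℝ} :
    w ∈ epiFn (conjFn h) ↔ ∀ z ∈ epiFn h, w.1 z.1 - z.2 ≤ w.2 := by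
  simp only [epiFn, conjFn, Set.mem_ofPred_eq, iSup_le_iff, EReal.coe_sub_le_iff_forall,
    Prod.forall]

theorem epiFn_conjFn_eq_iInter (h : X → EReal) :
    epiFn (conjFn h) = ⋂ z ∈ epiFn h, {w : WeakDual ℝ X × ℝ | w.1 z.1 - w.2 ≤ z.2} := by
  ext w
  simp only [mem_epiFn_conjFn_iff, Set.mem_iInter, Set.mem_ofPred_eq, sub_le_comm]

theorem isClosed_epiFn_conjFn (h : X → EReal) : IsClosed (epiFn (conjFn h)) := by
  rw [epiFn_conjFn_eq_iInter]
  exact isClosed_biInter fun z _ => isClosed_le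
    (((WeakDual.eval_continuous z.1).comp continuous_fst).sub continuous_snd) continuous_const

theorem convex_epiFn_conjFn (h : X → EReal) : Convex ℝ (epiFn (conjFn h)) := by
  rw [epiFn_conjFn_eq_iInter]
  refine convex_iInter₂ fun z _ => convex_halfSpace_le ⟨fun w w' => ?_, fun c w => ?_⟩ z.2
  · change w.1 z.1 + w'.1 z.1 - (w.2 + w'.2) = (w.1 z.1 - w.2) + (w'.1 z.1 - w'.2)
    ring
  · change c * w.1 z.1 - c * w.2 = c * (w.1 z.1 - w.2)
    ring

theorem mem_epiFn_add_indicatorE {V : Type*} {g : V → EReal} (hg : ∀ x, g x ≠ ⊥) {A : Set V}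
    {z : V × ℝ} : z ∈ epiFn (fun x => g x + indicatorE A x) ↔ z.1 ∈ A ∧ z ∈ epiFn g := by
  by_cases hz : z.1 ∈ A <;>
    simp [epiFn, indicatorE, hz, EReal.add_top_of_ne_bot (hg z.1)]

theorem sub_le_of_mem_epiFn_conjFn_add_indicatorE {g : X → EReal} (hg : ∀ x, g x ≠ ⊥)
    {A : Set X} {w : WeakDual ℝ X × ℝ} (hw : w ∈ epiFn (conjFn fun x => g x + indicatorE A x))
    {x : X} {t : ℝ} (hx : x ∈ A) (hxt : g x ≤ t) : w.1 x - w.2 ≤ t :=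
  sub_le_comm.1 (mem_epiFn_conjFn_iff.1 hw (x, t) ((mem_epiFn_add_indicatorE hg).2 ⟨hx, hxt⟩))

theorem epiFn_indicatorE {V : Type*} (D : Set V) : epiFn (indicatorE D) = D ×ˢ Set.Ici 0 := by
  ext ⟨x, t⟩
  by_cases hx : x ∈ D <;> simp [epiFn, indicatorE, hx]

theorem inGamma_indicatorE {C : Set X} (hne : C.Nonempty)
    (hcl : IsClosed C) (hcv : Convex ℝ C) : InGamma (indicatorE C) := by
  refine ⟨fun x => ?_, ⟨hne.some, by simp [indicatorE, hne.some_mem]⟩, ?_, ?_⟩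
  · unfold indicatorE; split_ifs <;> simp
  · change Convex ℝ (epiFn (indicatorE C))
    rw [epiFn_indicatorE]
    exact hcv.prod (convex_Ici 0)
  · have : indicatorE C = Cᶜ.indicator fun _ => ⊤ := by
      ext x; by_cases hx : x ∈ C <;> simp [indicatorE, hx]
    rw [this]
    exact hcl.isOpen_compl.lowerSemicontinuous_indicator le_top

namespace InGamma

variable [IsTopologicalAddGroup X] [ContinuousSMul ℝ X] [LocallyConvexSpace ℝ X] {h : X → EReal}

theorem nonempty_epiFn_conjFn (hh : InGamma h) : (epiFn (conjFn h)).Nonempty := by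
  obtain ⟨hbot, ⟨x₀, hx₀⟩, hconv, hlsc⟩ := hh
  set t₀ := (h x₀).toReal
  have hx₀t : h x₀ = t₀ := (EReal.coe_toReal hx₀ (hbot x₀)).symm
  have hmem : (x₀, t₀) ∈ epiFn h := hx₀t.le
  have hnot : (x₀, t₀ - 1) ∉ epiFn h := by
    simp only [epiFn, Set.mem_ofPred_eq, hx₀t, EReal.coe_le_coe_iff, not_le]
    linarith
  obtain ⟨φ, d, u, hS, hu⟩ :=
    geometric_hahn_banach_closed_point_prod hconv hlsc.isClosed_epiFn hnot
  have hd : 0 < -d := by linarith [hS _ hmem]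
  refine ⟨(((-d)⁻¹ • φ : StrongDual ℝ X), (-d)⁻¹ * u), mem_epiFn_conjFn_iff.2 fun z hz => ?_⟩
  change (-d)⁻¹ * φ z.1 - z.2 ≤ (-d)⁻¹ * u
  rw [inv_mul_sub_le_inv_mul_iff hd]
  linarith [hS z hz]

-- Fenchel–Moreau: `h ≤ h**`.
theorem le_of_forall_mem_epiFn_conjFn (hh : InGamma h) {y : X} {β : ℝ}
    (H : ∀ w ∈ epiFn (conjFn h), w.1 y - w.2 ≤ β) : h y ≤ β := by
  by_contra hyβ
  have ⟨_, ⟨x₀, hx₀⟩, hconv, hlsc⟩ := hh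
  obtain ⟨φ, d, u, hS, hu⟩ :=
    geometric_hahn_banach_closed_point_prod hconv hlsc.isClosed_epiFn (z := (y, β)) hyβ
  have hd : d ≤ 0 := nonpos_of_forall_ge_add_mul_le (a := φ x₀) (c := u) (t₀ := (h x₀).toReal)
    fun t ht => (hS (x₀, t) ((EReal.le_coe_toReal hx₀).trans (EReal.coe_le_coe ht))).le
  obtain ⟨⟨q₀, s₀⟩, hq₀⟩ := hh.nonempty_epiFn_conjFn
  have := le_of_forall_sub_le_of_nonvertical
    (fun x => ((topDualPairing ℝ X).flip x : WeakDual ℝ X →ₗ[ℝ] ℝ)) (S := epiFn h) (z := (y, β))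
    (fun q s hqs => sub_le_comm.1 (H (q, s) (mem_epiFn_conjFn_iff.2 hqs)))
    (mem_epiFn_conjFn_iff.1 hq₀) (y := (φ : WeakDual ℝ X)) hd (fun w hw => (hS w hw).le)
  exact (this.trans_lt hu).false

end InGamma

section coneGen

variable {V : Type*} [AddCommGroup V] [Module ℝ V] {D : Set V}

theorem zero_mem_coneGen : (0 : V) ∈ coneGen D := Or.inl rfl

theorem mem_coneGen_of_mem {v : V} (hv : v ∈ D) : v ∈ coneGen D :=
  Or.inr ⟨1, zero_le_one, v, subset_convexHull ℝ D hv, (one_smul ℝ v).symm⟩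

theorem smul_mem_coneGen {t : ℝ} (ht : 0 ≤ t) {v : V} (hv : v ∈ coneGen D) : t • v ∈ coneGen D := by
  rcases hv with rfl | ⟨s, hs, x, hx, rfl⟩
  · rw [smul_zero]; exact zero_mem_coneGen
  · exact Or.inr ⟨t * s, mul_nonneg ht hs, x, hx, smul_smul t s x⟩

theorem add_mem_coneGen {u v : V} (hu : u ∈ coneGen D) (hv : v ∈ coneGen D) :
    u + v ∈ coneGen D := by
  rcases hu with rfl | ⟨s, hs, x, hx, rfl⟩
  · rwa [zero_add]
  rcases hv with rfl | ⟨t, ht, y, hy, rfl⟩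
  · rw [add_zero]; exact Or.inr ⟨s, hs, x, hx, rfl⟩
  rcases hs.eq_or_lt with rfl | hs
  · rw [zero_smul, zero_add]; exact Or.inr ⟨t, ht, y, hy, rfl⟩
  have hst : 0 < s + t := by linarith
  refine Or.inr ⟨s + t, hst.le, _, convex_iff_div.1 (convex_convexHull ℝ D) hx hy hs.le ht hst, ?_⟩
  rw [smul_add, smul_smul, smul_smul, mul_div_cancel₀ _ hst.ne', mul_div_cancel₀ _ hst.ne']

theorem convex_coneGen : Convex ℝ (coneGen D) := fun _ hu _ hv _ _ ha hb _ =>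
  add_mem_coneGen (smul_mem_coneGen ha hu) (smul_mem_coneGen hb hv)

theorem coneGen_subset {S : Set V} (hD : D ⊆ S) (h0 : (0 : V) ∈ S)
    (hadd : ∀ u ∈ S, ∀ v ∈ S, u + v ∈ S) (hsmul : ∀ t : ℝ, 0 ≤ t → ∀ v ∈ S, t • v ∈ S) :
    coneGen D ⊆ S := by
  have hS : Convex ℝ S := fun u hu v hv a b ha hb _ =>
    hadd _ (hsmul a ha u hu) _ (hsmul b hb v hv)
  rintro _ (rfl | ⟨t, ht, x, hx, rfl⟩)
  · exact h0
  · exact hsmul t ht x (convexHull_min hD hS hx)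

end coneGen

section System

variable {I : Type*} {C : Set X} {f : I → X → EReal} {g : X → EReal}

theorem charCone_subset : charCone C f ⊆ {w | ∀ x ∈ solSet C f, w.1 x ≤ w.2} := by
  refine coneGen_subset ?_ (fun _ _ => le_rfl) ?_ ?_
  · rintro w (hw | hw) x hx
    · simpa using mem_epiFn_conjFn_iff.1 hw (x, 0) (by simp [epiFn, indicatorE, hx.1])
    · obtain ⟨i, hi⟩ := Set.mem_iUnion.1 hw
      simpa using mem_epiFn_conjFn_iff.1 hi (x, 0) (by simpa [epiFn] using hx.2 i)
  · intro u hu v hv x hx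
    change u.1 x + v.1 x ≤ u.2 + v.2
    linarith [hu x hx, hv x hx]
  · intro t ht v hv x hx
    change t * v.1 x ≤ t * v.2
    exact mul_le_mul_of_nonneg_left (hv x hx) ht

theorem add_charCone_subset (hg : ∀ x, g x ≠ ⊥) :
    epiFn (conjFn g) + charCone C f ⊆
      epiFn (conjFn fun x => g x + indicatorE (solSet C f) x) := by
  rintro _ ⟨u, hu, v, hv, rfl⟩
  refine mem_epiFn_conjFn_iff.2 fun z hz => ?_
  rw [mem_epiFn_add_indicatorE hg] at hz
  change u.1 z.1 + v.1 z.1 - z.2 ≤ u.2 + v.2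
  linarith [mem_epiFn_conjFn_iff.1 hu z hz.2, charCone_subset hv z.1 hz.1]

variable [IsTopologicalAddGroup X] [ContinuousSMul ℝ X] [LocallyConvexSpace ℝ X]

theorem mem_solSet_of_forall_sub_le (hC : InGamma (indicatorE C)) (hf : ∀ i, InGamma (f i))
    (hg : InGamma g) {y : X} {β : ℝ}
    (H : ∀ w ∈ epiFn (conjFn g) + charCone C f, w.1 y - w.2 ≤ β) :
    y ∈ solSet C f ∧ g y ≤ β := by
  obtain ⟨w₀, hw₀⟩ := hg.nonempty_epiFn_conjFn
  have hgen : ∀ v ∈ epiFn (conjFn (indicatorE C)) ∪ ⋃ i, epiFn (conjFn (f i)),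
      v.1 y - v.2 ≤ 0 := by
    intro v hv
    refine nonpos_of_forall_ge_add_mul_le (a := w₀.1 y - w₀.2) (c := β) (t₀ := 0) fun t ht => ?_
    have := H _ (Set.add_mem_add hw₀ (smul_mem_coneGen ht (mem_coneGen_of_mem hv)))
    change w₀.1 y + t * v.1 y - (w₀.2 + t * v.2) ≤ β at this
    linarith
  have hyC : indicatorE C y ≤ (0 : ℝ) :=
    hC.le_of_forall_mem_epiFn_conjFn fun v hv => hgen v (Or.inl hv)
  have hyf (i : I) : f i y ≤ (0 : ℝ) :=
    (hf i).le_of_forall_mem_epiFn_conjFn fun v hv => hgen v (Or.inr (Set.mem_iUnion.2 ⟨i, hv⟩))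
  refine ⟨⟨?_, fun i => by exact_mod_cast hyf i⟩, hg.le_of_forall_mem_epiFn_conjFn fun w hw =>
    H w (Set.subset_add_left _ zero_mem_coneGen hw)⟩
  have : (y, (0 : ℝ)) ∈ epiFn (indicatorE C) := hyC
  rw [epiFn_indicatorE] at this
  exact this.1

end System

theorem stmt3_general [IsTopologicalAddGroup X] [ContinuousSMul ℝ X] [LocallyConvexSpace ℝ X] {I : Type*} (C : Set X) (hCne : C.Nonempty) (hCcl : IsClosed C) (hCcv : Convex ℝ C)
    (f : I → X → EReal) (hf : ∀ i, InGamma (f i))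
    (g : X → EReal) (hg : InGamma g)
    (hA : (solSet C f ∩ domFn g).Nonempty) :
    closure (epiFn (conjFn g) + charCone C f) =
      epiFn (conjFn (fun x => g x + indicatorE (solSet C f) x)) := by
  set L := epiFn (conjFn g) + charCone C f
  refine (closure_minimal (add_charCone_subset hg.1) (isClosed_epiFn_conjFn _)).antisymm
    fun z hz => by_contra fun hzL => ?_
  obtain ⟨φ, d, u, hS, hu⟩ := geometric_hahn_banach_closed_point_prod
    ((convex_epiFn_conjFn g).add convex_coneGen).closure isClosed_closure hzL
  obtain ⟨x, rfl⟩ := LinearMap.dualEmbedding_surjective (topDualPairing ℝ X) φ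
  obtain ⟨w₀, hw₀⟩ := hg.nonempty_epiFn_conjFn
  have hd : d ≤ 0 := nonpos_of_forall_ge_add_mul_le (a := w₀.1 x) (c := u) (t₀ := w₀.2)
    fun t ht => (hS (w₀.1, t) (subset_closure (Set.subset_add_left _ zero_mem_coneGen
      (hw₀.trans (EReal.coe_le_coe ht))))).le
  have hz' (y : X) (β : ℝ) (H : ∀ w ∈ L, w.1 y - w.2 ≤ β) : z.1 y - z.2 ≤ β :=
    have ⟨hyA, hgy⟩ := mem_solSet_of_forall_sub_le (inGamma_indicatorE hCne hCcl hCcv) hf hg H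
    sub_le_of_mem_epiFn_conjFn_add_indicatorE hg.1 hz hyA hgy
  obtain ⟨a, haA, ha⟩ := hA
  have ha' (w) (hw : w ∈ L) : w.1 a - w.2 ≤ (g a).toReal :=
    sub_le_of_mem_epiFn_conjFn_add_indicatorE hg.1 (add_charCone_subset hg.1 hw) haA
      (EReal.le_coe_toReal ha.ne)
  have key := le_of_forall_sub_le_of_nonvertical (fun q : WeakDual ℝ X => (q : X →ₗ[ℝ] ℝ))
    hz' ha' hd fun w hw => (hS w (subset_closure hw)).le
  exact (key.trans_lt hu).false

/-- Lemma 3: `w*-cl (epi f* + K) = epi (f + δ_A)*` whenever `A ∩ dom f ≠ ∅`. -/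
theorem stmt3 [IsTopologicalAddGroup X] [ContinuousSMul ℝ X] [LocallyConvexSpace ℝ X] [T2Space X] {I : Type*} (C : Set X) (hCne : C.Nonempty) (hCcl : IsClosed C) (hCcv : Convex ℝ C)
    (f : I → X → EReal) (hf : ∀ i, InGamma (f i))
    (g : X → EReal) (hg : InGamma g)
    (hA : (solSet C f ∩ domFn g).Nonempty) :
    closure (epiFn (conjFn g) + charCone C f) =
      epiFn (conjFn (fun x => g x + indicatorE (solSet C f) x)) :=
  stmt3_general C hCne hCcl hCcv f hf g hg hA
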